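/- If n ≤ m and G is a graph of order n admitting a local distance antimagic labeling, then χ_ld(G + \overline{K_m}) ≤ χ_ld(G) + 1. -/

import Mathlib

open Finset

open Classical in
/-- The weight of a vertex: sum of labels of its neighbors. -/
noncomputable def ldWeight {V : Type*} (G : SimpleGraph V) [Fintype V] (f : V → ℕ) (v : V) : ℕ :=
  ∑ x ∈ Finset.univ, if G.Adj v x then f x else 0

/-- `f` is a local distance antimagic labeling of `G`: a bijection onto `{1,…,|V|}`
with adjacent vertices getting distinct weights. -/
def IsLDAL {V : Type*} (G : SimpleGraph V) [Fintype V] (f : V → ℕ) : Prop :=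
  Set.BijOn f Set.univ (Set.Icc 1 (Fintype.card V)) ∧
    ∀ ⦃u v : V⦄, G.Adj u v → ldWeight G f u ≠ ldWeight G f v

/-- The local distance antimagic chromatic number: minimum number of distinct weights. -/
noncomputable def chiLD {V : Type*} (G : SimpleGraph V) [Fintype V] : ℕ :=
  sInf {k | ∃ f : V → ℕ, IsLDAL G f ∧ (Finset.univ.image (ldWeight G f)).card = k}

/-- The join `G + H` of two graphs. -/
def graphJoin {α β : Type*} (G : SimpleGraph α) (H : SimpleGraph β) :
    SimpleGraph (α ⊕ β) where
  Adj x y :=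
    match x, y with
    | Sum.inl a, Sum.inl b => G.Adj a b
    | Sum.inr a, Sum.inr b => H.Adj a b
    | Sum.inl _, Sum.inr _ => True
    | Sum.inr _, Sum.inl _ => True
  symm := by
    refine ⟨?_⟩
    rintro (a | a) (b | b) h
    exacts [h.symm, trivial, trivial, h.symm]
  loopless := by
    refine ⟨?_⟩
    rintro (a | a) h
    exacts [G.ne_of_adj h rfl, H.ne_of_adj h rfl]

/-- The lexicographic product `G[H]`. -/
def lexProd {α β : Type*} (G : SimpleGraph α) (H : SimpleGraph β) :
    SimpleGraph (α × β) where
  Adj x y := G.Adj x.1 y.1 ∨ (x.1 = y.1 ∧ H.Adj x.2 y.2)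
  symm := by
    refine ⟨?_⟩
    rintro x y (h | ⟨e, h⟩)
    exacts [Or.inl h.symm, Or.inr ⟨e.symm, h.symm⟩]
  loopless := by
    refine ⟨?_⟩
    rintro x (h | ⟨e, h⟩)
    exacts [G.ne_of_adj h rfl, H.ne_of_adj h rfl]

/-- The friendship graph `F_n`: `n` triangles sharing the central vertex `none`. -/
def friendship (n : ℕ) : SimpleGraph (Option (Fin n × Fin 2)) where
  Adj x y := x ≠ y ∧ (x = none ∨ y = none ∨ ∃ i a b, x = some (i, a) ∧ y = some (i, b))
  symm := by
    refine ⟨?_⟩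
    rintro x y ⟨hne, h⟩
    refine ⟨hne.symm, ?_⟩
    rcases h with h | h | ⟨i, a, b, hx, hy⟩
    · exact Or.inr (Or.inl h)
    · exact Or.inl h
    · exact Or.inr (Or.inr ⟨i, b, a, hy, hx⟩)
  loopless := ⟨fun x h => h.1 rfl⟩

/-- The bistar `B_{n,n}`: two adjacent centers, each with `n` leaves. -/
def bistar (n : ℕ) : SimpleGraph (Bool ⊕ Bool × Fin n) where
  Adj x y :=
    match x, y with
    | Sum.inl a, Sum.inl b => a ≠ b
    | Sum.inl a, Sum.inr (c, _) => a = c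
    | Sum.inr (c, _), Sum.inl a => a = c
    | Sum.inr _, Sum.inr _ => False
  symm := by
    refine ⟨?_⟩
    rintro (a | ⟨c, i⟩) (b | ⟨d, j⟩) h
    exacts [h.symm, h, h, h.elim]
  loopless := by
    refine ⟨?_⟩
    rintro (a | ⟨c, i⟩) h
    exacts [h rfl, h]


/-!
Take an optimal labelling `f` of `G` and label the `m` new vertices `n + 1, …, n + m`. A new
vertex sees exactly the vertices of `G`, so all new vertices get the same weight `∑ f ≤ n²`; an
old vertex gets its old weight shifted by `(n + 1) + ⋯ + (n + m) ≥ m (n + 1) > n²`. Hence adjacent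
vertices still have distinct weights, and only one new weight appears.
-/

lemma Set.BijOn.sumElim_univ {α β γ : Type*} {f : α → γ} {g : β → γ} {s t : Set γ}
    (hf : Set.BijOn f Set.univ s) (hg : Set.BijOn g Set.univ t) (hst : Disjoint s t) :
    Set.BijOn (Sum.elim f g) Set.univ (s ∪ t) := by
  refine ⟨?_, ?_, ?_⟩
  · rintro (a | b) -
    exacts [Or.inl (hf.mapsTo trivial), Or.inr (hg.mapsTo trivial)]
  · rintro (a | b) - (a' | b') - h
    · exact congrArg Sum.inl (hf.injOn trivial trivial h)
    · exact (hst.ne_of_mem (hf.mapsTo trivial) (hg.mapsTo trivial) h).elim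
    · exact (hst.ne_of_mem (hf.mapsTo trivial) (hg.mapsTo trivial) h.symm).elim
    · exact congrArg Sum.inr (hg.injOn trivial trivial h)
  · rintro c (hc | hc)
    · obtain ⟨a, -, rfl⟩ := hf.surjOn hc
      exact ⟨Sum.inl a, trivial, rfl⟩
    · obtain ⟨b, -, rfl⟩ := hg.surjOn hc
      exact ⟨Sum.inr b, trivial, rfl⟩

lemma bijOn_fin_add_Icc (k m : ℕ) :
    Set.BijOn (fun i : Fin m => k + 1 + (i : ℕ)) Set.univ (Set.Icc (k + 1) (k + m)) := by
  refine ⟨fun i _ => by simp only [Set.mem_Icc]; omega, fun i _ j _ h => Fin.ext (by simpa using h), ?_⟩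
  intro c ⟨hc₁, hc₂⟩
  exact ⟨⟨c - (k + 1), by omega⟩, trivial, by dsimp only; omega⟩

section Join

variable {α β : Type*} [Fintype α] [Fintype β] (G : SimpleGraph α) (H : SimpleGraph β)

open Classical in
lemma ldWeight_graphJoin_inl (f : α → ℕ) (g : β → ℕ) (a : α) :
    ldWeight (graphJoin G H) (Sum.elim f g) (Sum.inl a) = ldWeight G f a + ∑ b, g b := by
  simp only [ldWeight, graphJoin, Fintype.sum_sum_type, Sum.elim_inl, Sum.elim_inr, ↓reduceIte,
    Nat.add_right_cancel_iff]
  congr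

open Classical in
lemma ldWeight_graphJoin_inr (f : α → ℕ) (g : β → ℕ) (b : β) :
    ldWeight (graphJoin G H) (Sum.elim f g) (Sum.inr b) = ∑ a, f a + ldWeight H g b := by
  simp only [ldWeight, graphJoin, Fintype.sum_sum_type, Sum.elim_inl, Sum.elim_inr, ↓reduceIte,
    Nat.add_left_cancel_iff]
  congr

end Join

lemma ldWeight_bot {V : Type*} [Fintype V] (f : V → ℕ) (v : V) : ldWeight ⊥ f v = 0 := by
  simp [ldWeight]

lemma card_image_ldWeight_graphJoin_bot_le {α β : Type*} [Fintype α] [Fintype β]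
    (G : SimpleGraph α) (f : α → ℕ) (g : β → ℕ) :
    #(univ.image (ldWeight (graphJoin G (⊥ : SimpleGraph β)) (Sum.elim f g)))
      ≤ #(univ.image (ldWeight G f)) + 1 := by
  have hsub : univ.image (ldWeight (graphJoin G ⊥) (Sum.elim f g))
      ⊆ insert (∑ a, f a) ((univ.image (ldWeight G f)).image (· + ∑ b, g b)) := by
    rintro _ hw
    obtain ⟨v | b, -, rfl⟩ := mem_image.mp hw
    · rw [ldWeight_graphJoin_inl]
      exact mem_insert_of_mem (mem_image_of_mem _ (mem_image_of_mem _ (mem_univ v)))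
    · rw [ldWeight_graphJoin_inr, ldWeight_bot, add_zero]
      exact mem_insert_self _ _
  calc _ ≤ _ := card_le_card hsub
    _ ≤ _ := card_insert_le _ _
    _ ≤ _ := Nat.add_le_add_right card_image_le 1

lemma IsLDAL.sum_le {V : Type*} [Fintype V] {G : SimpleGraph V} {f : V → ℕ} (hf : IsLDAL G f) :
    ∑ v, f v ≤ Fintype.card V * Fintype.card V := by
  calc ∑ v, f v ≤ ∑ _v : V, Fintype.card V := sum_le_sum fun v _ => (hf.1.mapsTo trivial).2
    _ = _ := by simp

lemma mul_le_sum_fin_add (k m : ℕ) : m * (k + 1) ≤ ∑ i : Fin m, (k + 1 + (i : ℕ)) := by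
  calc m * (k + 1) = ∑ _i : Fin m, (k + 1) := by simp
    _ ≤ _ := sum_le_sum fun i _ => Nat.le_add_right _ _

lemma IsLDAL.graphJoin_bot {α : Type*} [Fintype α] {G : SimpleGraph α} {f : α → ℕ}
    (hf : IsLDAL G f) {m : ℕ} (hm : Fintype.card α ≤ m) :
    IsLDAL (graphJoin G (⊥ : SimpleGraph (Fin m)))
      (Sum.elim f fun i => Fintype.card α + 1 + (i : ℕ)) := by
  set n := Fintype.card α
  have hlight (a : α) : ∑ x, f x < ∑ i : Fin m, (n + 1 + (i : ℕ)) := by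
    have hn : 0 < n := Fintype.card_pos_iff.mpr ⟨a⟩
    calc ∑ x, f x ≤ n * n := hf.sum_le
      _ < m * (n + 1) := by nlinarith
      _ ≤ _ := mul_le_sum_fin_add n m
  refine ⟨?_, ?_⟩
  · have hIcc : Set.Icc 1 n ∪ Set.Icc (n + 1) (n + m) = Set.Icc 1 (n + m) := by
      ext; simp only [Set.mem_union, Set.mem_Icc]; omega
    rw [Fintype.card_sum, Fintype.card_fin, ← hIcc]
    exact hf.1.sumElim_univ (bijOn_fin_add_Icc n m)
      (Set.disjoint_left.mpr fun _ h₁ h₂ => by simp only [Set.mem_Icc] at h₁ h₂; omega)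
  · rintro (a | i) (b | j) hadj
    · rw [ldWeight_graphJoin_inl, ldWeight_graphJoin_inl]
      exact fun h => hf.2 hadj (Nat.add_right_cancel h)
    · rw [ldWeight_graphJoin_inl, ldWeight_graphJoin_inr, ldWeight_bot]
      have := hlight a
      omega
    · rw [ldWeight_graphJoin_inl, ldWeight_graphJoin_inr, ldWeight_bot]
      have := hlight b
      omega
    · exact absurd hadj (by simp [graphJoin])

lemma chiLD_le {V : Type*} [Fintype V] {G : SimpleGraph V} {f : V → ℕ} (hf : IsLDAL G f) :
    chiLD G ≤ #(univ.image (ldWeight G f)) :=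
  Nat.sInf_le ⟨f, hf, rfl⟩

lemma exists_isLDAL_card_image_eq_chiLD {V : Type*} [Fintype V] {G : SimpleGraph V}
    (hG : ∃ f, IsLDAL G f) : ∃ f, IsLDAL G f ∧ #(univ.image (ldWeight G f)) = chiLD G :=
  let ⟨f, hf⟩ := hG
  Nat.sInf_mem (s := {k | ∃ f, IsLDAL G f ∧ #(univ.image (ldWeight G f)) = k}) ⟨_, f, hf, rfl⟩

theorem stmt_6 {α : Type*} [Fintype α] (G : SimpleGraph α)
    (n m : ℕ) (hn : Fintype.card α = n) (hnm : n ≤ m)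
    (hG : ∃ f, IsLDAL G f) :
    chiLD (graphJoin G (⊥ : SimpleGraph (Fin m))) ≤ chiLD G + 1 := by
  subst hn
  obtain ⟨f, hf, hfχ⟩ := exists_isLDAL_card_image_eq_chiLD hG
  calc chiLD (graphJoin G ⊥) ≤ _ := chiLD_le (hf.graphJoin_bot hnm)
    _ ≤ _ := card_image_ldWeight_graphJoin_bot_le G f _
    _ = chiLD G + 1 := by rw [hfχ]
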